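/- arXiv:2206.03347 — 2 statements merged into one kernel-verified Lean document; each statement's English description precedes it below -/
import Mathlib

section
/- Let μ⁻, μ⁺ be probability measures on ℝ^d with compact supports X⁻, X⁺ and let c : X⁻ × X⁺ → ℝ be continuous. For every ε > 0, if γ_ε is a coupling of μ⁻ and μ⁺ attaining the infimum defining v_ε, then the function ε ↦ v_ε is differentiable at ε with derivative v'_ε = Ent(γ_ε | μ⁻⊗μ⁺). -/
/-!
Write `F_t(γ) = ∫ c dγ + t Ent(γ)`, so that `v(t) = inf F_t`. As
`F_t(γ_ε) = v(ε) + (t - ε) Ent(γ_ε)`, it suffices to bound `F_t(γ)` below by the same affine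
function of `t`, up to `O((t - ε)²)`, uniformly in the coupling `γ`. This follows from quadratic
growth of `F_ε` around its minimiser: the midpoint `(γ + γ_ε)/2` is again a coupling, so
optimality of `γ_ε` and strong convexity of `x log x` (its Jensen gap dominates the squared
Hellinger distance) give `(∫ c dγ - ∫ c dγ_ε)² ≤ (8 M² / ε) (F_ε(γ) - F_ε(γ_ε))`, where `M`
bounds `|c|` on the compact product of the supports.
-/

open MeasureTheory Real Set Filter Classical
open scoped ENNReal NNReal Topology

noncomputable section

/-- Relative entropy (Kullback–Leibler divergence) `Ent(γ | q)`, with values in `EReal`: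
it equals `∫ ρ log ρ dq` if `γ = ρ·q` (with `ρ log ρ` integrable) and `+∞` otherwise. -/
def Ent {α : Type*} [MeasurableSpace α] (γ q : Measure α) : EReal :=
  if γ ≪ q ∧ Integrable (fun x => ((γ.rnDeriv q) x).toReal * Real.log ((γ.rnDeriv q) x).toReal) q
  then ((∫ x, ((γ.rnDeriv q) x).toReal * Real.log ((γ.rnDeriv q) x).toReal ∂q : ℝ) : EReal)
  else ⊤

/-- Entropic optimal transport cost
`v_ε = inf { ∫ c dγ + ε Ent(γ | μ⁻ ⊗ μ⁺) : γ coupling of μ⁻ and μ⁺ }`. -/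
def entCost {α β : Type*} [MeasurableSpace α] [MeasurableSpace β]
    (μm : Measure α) (μp : Measure β) (c : α × β → ℝ) (ε : ℝ) : EReal :=
  sInf {v : EReal | ∃ γ : Measure (α × β), IsProbabilityMeasure γ ∧ γ.fst = μm ∧ γ.snd = μp ∧
    v = ((∫ p, c p ∂γ : ℝ) : EReal) + (ε : EReal) * Ent γ (μm.prod μp)}

/-- Support of a measure: the set of points all of whose open neighbourhoods have
positive measure. -/
def msupport {α : Type*} [TopologicalSpace α] [MeasurableSpace α] (μ : Measure α) : Set α :=
  {x | ∀ U : Set α, IsOpen U → x ∈ U → μ U ≠ 0}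

def mulLogGap (a b : ℝ) : ℝ :=
  (a * log a + b * log b) / 2 - (a + b) / 2 * log ((a + b) / 2)

lemma two_mul_sub_sqrt_mul_le_mul_log_div {a m : ℝ} (ha : 0 ≤ a) (hm : 0 < m) :
    2 * (a - √a * √m) ≤ a * log (a / m) := by
  rcases ha.eq_or_lt with rfl | ha
  · simp
  have hsa : 0 < √a := sqrt_pos.2 ha
  have hsm : 0 < √m := sqrt_pos.2 hm
  have hlog : log (a / m) = 2 * log (√a / √m) := by
    rw [← sqrt_div' _ hm.le, log_sqrt (div_pos ha hm).le]; ring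
  have hlog_ge : 1 - √m / √a ≤ log (√a / √m) := by
    simpa only [inv_div] using one_sub_inv_le_log_of_pos (div_pos hsa hsm)
  calc 2 * (a - √a * √m) = 2 * a * (1 - √m / √a) := by
        field_simp
        linear_combination -√m * sq_sqrt ha.le
    _ ≤ 2 * a * log (√a / √m) := by gcongr
    _ = a * log (a / m) := by rw [hlog]; ring

lemma sq_sqrt_sub_add_sq_sqrt_sub_le_mulLogGap {a b : ℝ} (ha : 0 ≤ a) (hb : 0 ≤ b) :
    (√a - √((a + b) / 2)) ^ 2 + (√b - √((a + b) / 2)) ^ 2 ≤ 2 * mulLogGap a b := by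
  rcases (add_nonneg ha hb).eq_or_lt with hab | hab
  · obtain rfl : a = 0 := by linarith
    obtain rfl : b = 0 := by linarith
    simp [mulLogGap]
  have hm : 0 < (a + b) / 2 := by positivity
  have h2gap :
      2 * mulLogGap a b = a * log (a / ((a + b) / 2)) + b * log (b / ((a + b) / 2)) := by
    have hsplit : ∀ x : ℝ, 0 ≤ x →
        x * log (x / ((a + b) / 2)) = x * log x - x * log ((a + b) / 2) := by
      intro x hx
      rcases hx.eq_or_lt with rfl | hx
      · simp
      · rw [log_div hx.ne' hm.ne']; ring
    rw [hsplit a ha, hsplit b hb, mulLogGap]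
    ring
  have := two_mul_sub_sqrt_mul_le_mul_log_div ha hm
  have := two_mul_sub_sqrt_mul_le_mul_log_div hb hm
  nlinarith [sq_sqrt ha, sq_sqrt hb, sq_sqrt hm.le]

lemma mulLogGap_nonneg {a b : ℝ} (ha : 0 ≤ a) (hb : 0 ≤ b) : 0 ≤ mulLogGap a b := by
  nlinarith [sq_sqrt_sub_add_sq_sqrt_sub_le_mulLogGap ha hb, sq_nonneg (√a - √((a + b) / 2)),
    sq_nonneg (√b - √((a + b) / 2))]

lemma sq_sub_le_mulLogGap {a b : ℝ} (ha : 0 ≤ a) (hb : 0 ≤ b) :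
    (a - b) ^ 2 ≤ 8 * mulLogGap a b * (a + b) := by
  have h := sq_sqrt_sub_add_sq_sqrt_sub_le_mulLogGap ha hb
  set x := √a; set y := √b; set z := √((a + b) / 2)
  have hx := sq_sqrt ha; have hy := sq_sqrt hb
  have hz : z ^ 2 = (a + b) / 2 := sq_sqrt (by positivity)
  have hxy : (x - y) ^ 2 ≤ 4 * mulLogGap a b := by nlinarith [sq_nonneg (x + y - 2 * z)]
  have hxy' : (x + y) ^ 2 ≤ 2 * (a + b) := by nlinarith [sq_nonneg (x - y)]
  calc (a - b) ^ 2 = (x - y) ^ 2 * (x + y) ^ 2 := by rw [← hx, ← hy]; ring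
    _ ≤ 4 * mulLogGap a b * (2 * (a + b)) :=
        mul_le_mul hxy hxy' (sq_nonneg _) (by nlinarith [sq_nonneg (x - y)])
    _ = 8 * mulLogGap a b * (a + b) := by ring

/-- With `Δ := (C + ε E) - (C₀ + ε E₀)` one has
`(C + t E) - (C₀ + t E₀) = (t Δ - (t - ε) (C - C₀)) / ε`, and the quadratic growth of `Δ` in
`C - C₀` absorbs the linear term. -/
lemma affine_sub_sq_le_of_sq_le_mul_gap {C E C₀ E₀ ε t K : ℝ} (hε : 0 < ε) (ht : ε ≤ 2 * t)
    (hK : 0 ≤ K) (hopt : C₀ + ε * E₀ ≤ C + ε * E)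
    (hgrowth : (C - C₀) ^ 2 ≤ K * (C + ε * E - (C₀ + ε * E₀))) :
    C₀ + t * E₀ - K / (2 * ε ^ 2) * (t - ε) ^ 2 ≤ C + t * E := by
  set Δ := C + ε * E - (C₀ + ε * E₀)
  have hΔ : 0 ≤ Δ := by linarith
  have hquad : 0 ≤ ε ^ 2 * Δ - 2 * ε * (t - ε) * (C - C₀) + K * (t - ε) ^ 2 := by
    rcases hK.eq_or_lt with rfl | hK
    · have : C - C₀ = 0 := by nlinarith
      rw [this]; nlinarith [sq_nonneg ε]
    · by_contra! h
      nlinarith [sq_nonneg (ε * (C - C₀) - K * (t - ε)), mul_neg_of_pos_of_neg hK h]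
  have hrw : C + t * E - (C₀ + t * E₀ - K / (2 * ε ^ 2) * (t - ε) ^ 2)
      = (2 * ε * t * Δ - 2 * ε * (t - ε) * (C - C₀) + K * (t - ε) ^ 2) / (2 * ε ^ 2) := by
    field_simp
    ring
  rw [← sub_nonneg, hrw]
  apply div_nonneg _ (by positivity)
  nlinarith [mul_le_mul_of_nonneg_right ht hΔ]

lemma hasDerivAt_of_abs_sub_le_sq {f : ℝ → ℝ} {f' x C : ℝ}
    (h : ∀ᶠ t in 𝓝 x, |f t - f x - (t - x) * f'| ≤ C * (t - x) ^ 2) : HasDerivAt f f' x := by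
  rw [hasDerivAt_iff_isLittleO]
  refine (Asymptotics.IsBigO.of_bound C ?_).trans_isLittleO
    (Asymptotics.isLittleO_pow_sub_sub x one_lt_two)
  filter_upwards [h] with t ht
  simpa [smul_eq_mul, mul_comm] using ht

lemma sq_integral_abs_le_of_sq_le_mul {α : Type*} [MeasurableSpace α] {μ : Measure α}
    {h u w : α → ℝ} (hh : Integrable h μ) (hu : Integrable u μ) (hw : Integrable w μ)
    (hu0 : ∀ x, 0 ≤ u x) (hw0 : ∀ x, 0 ≤ w x) (huw : ∀ x, h x ^ 2 ≤ u x * w x) :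
    (∫ x, |h x| ∂μ) ^ 2 ≤ (∫ x, u x ∂μ) * ∫ x, w x ∂μ := by
  -- `|h| ≤ √(u w)`, so `u s² - 2 s |h| + w ≥ 0` pointwise for every `s`
  have hquad : ∀ s : ℝ, 0 ≤ (∫ x, u x ∂μ) * (s * s) + (-2 * ∫ x, |h x| ∂μ) * s + ∫ x, w x ∂μ := by
    intro s
    have hpt : ∀ x, 0 ≤ u x * (s * s) + -2 * |h x| * s + w x := by
      intro x
      rcases (hu0 x).eq_or_lt with hu0 | hupos
      · have : h x = 0 := pow_eq_zero_iff two_ne_zero |>.1 <|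
          le_antisymm (by simpa [← hu0] using huw x) (sq_nonneg _)
        simp [this, ← hu0, hw0 x]
      · by_contra! hneg
        nlinarith [sq_abs (h x), sq_nonneg (u x * s - |h x|), mul_neg_of_pos_of_neg hupos hneg,
          huw x]
    have hint : 0 ≤ ∫ x, u x * (s * s) + -2 * |h x| * s + w x ∂μ := integral_nonneg hpt
    have hh' : Integrable (fun x => -2 * |h x| * s) μ := (hh.abs.const_mul (-2)).mul_const s
    rwa [integral_add (f := fun x => u x * (s * s) + -2 * |h x| * s) ((hu.mul_const _).add hh') hw,
      integral_add (hu.mul_const _) hh', integral_mul_const, integral_mul_const,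
      integral_const_mul] at hint
  have := discrim_le_zero hquad
  rw [discrim] at this
  nlinarith

lemma half_smul_add_self {α : Type*} [MeasurableSpace α] (ν : Measure α) :
    (2⁻¹ : ℝ≥0) • (ν + ν) = ν := by
  rw [← two_smul ℝ≥0, smul_smul, inv_mul_cancel₀ two_ne_zero, one_smul]

lemma integral_half_smul_add {α : Type*} [MeasurableSpace α] {μ ν : Measure α} {f : α → ℝ}
    (hμ : Integrable f μ) (hν : Integrable f ν) :
    ∫ x, f x ∂((2⁻¹ : ℝ≥0) • (μ + ν)) = (∫ x, f x ∂μ + ∫ x, f x ∂ν) / 2 := by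
  rw [integral_smul_nnreal_measure, integral_add_measure hμ hν, NNReal.smul_def, smul_eq_mul]
  norm_num [div_eq_inv_mul]

lemma integrable_of_continuousOn_of_ae_mem {X : Type*} [TopologicalSpace X] [T2Space X]
    [MeasurableSpace X] [OpensMeasurableSpace X] {μ : Measure X} [IsFiniteMeasure μ] {f : X → ℝ}
    {K : Set X} (hK : IsCompact K) (hf : ContinuousOn f K) (hμ : ∀ᵐ x ∂μ, x ∈ K) :
    Integrable f μ := by
  rw [← Measure.restrict_eq_self_of_ae_mem hμ]
  exact hf.integrableOn_compact hK

section Entropy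

variable {α : Type*} [MeasurableSpace α] {γ γ' q : Measure α}

lemma Ent_ne_top_iff : Ent γ q ≠ ⊤ ↔ γ ≪ q ∧
    Integrable (fun x => (γ.rnDeriv q x).toReal * log (γ.rnDeriv q x).toReal) q := by
  unfold Ent; split_ifs with h <;> simp [h]

lemma Ent_ne_bot : Ent γ q ≠ ⊥ := by
  unfold Ent; split_ifs <;> simp

lemma toReal_Ent (h : Ent γ q ≠ ⊤) :
    (Ent γ q).toReal = ∫ x, (γ.rnDeriv q x).toReal * log (γ.rnDeriv q x).toReal ∂q := by
  rw [Ent, if_pos (Ent_ne_top_iff.1 h)]; rfl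

lemma Ent_self [SigmaFinite q] : Ent q q = 0 := by
  have hzero : (fun x => (q.rnDeriv q x).toReal * log (q.rnDeriv q x).toReal) =ᵐ[q] 0 := by
    filter_upwards [Measure.rnDeriv_self q] with x hx
    simp [hx]
  rw [Ent, if_pos ⟨.rfl, (integrable_congr hzero).2 (integrable_zero _ _ _)⟩,
    integral_congr_ae hzero]
  simp

lemma toReal_rnDeriv_half_smul_add [SigmaFinite q] [IsFiniteMeasure γ] [IsFiniteMeasure γ'] :
    (fun x => (((2⁻¹ : ℝ≥0) • (γ + γ')).rnDeriv q x).toReal) =ᵐ[q]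
      fun x => ((γ.rnDeriv q x).toReal + (γ'.rnDeriv q x).toReal) / 2 := by
  filter_upwards [Measure.rnDeriv_smul_left (γ + γ') q 2⁻¹, Measure.rnDeriv_add γ γ' q,
    Measure.rnDeriv_lt_top γ q, Measure.rnDeriv_lt_top γ' q] with x hsmul hadd hγ hγ'
  rw [hsmul, Pi.smul_apply, hadd, Pi.add_apply, ENNReal.smul_def, smul_eq_mul, ENNReal.toReal_mul,
    ENNReal.toReal_add hγ.ne hγ'.ne]
  simp [div_eq_inv_mul]

lemma integrable_mul_log_half_add [IsFiniteMeasure q] (hγ : Ent γ q ≠ ⊤) (hγ' : Ent γ' q ≠ ⊤) :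
    Integrable (fun x => ((γ.rnDeriv q x).toReal + (γ'.rnDeriv q x).toReal) / 2 *
      log (((γ.rnDeriv q x).toReal + (γ'.rnDeriv q x).toReal) / 2)) q := by
  set f := fun x => (γ.rnDeriv q x).toReal
  set f' := fun x => (γ'.rnDeriv q x).toReal
  have hf : Measurable f := (Measure.measurable_rnDeriv γ q).ennreal_toReal
  have hf' : Measurable f' := (Measure.measurable_rnDeriv γ' q).ennreal_toReal
  have hmid : Measurable fun x => (f x + f' x) / 2 := (hf.add hf').div_const 2
  -- `-1 ≤ y log y`, and convexity bounds the midpoint value by the average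
  refine Integrable.mono' ((((Ent_ne_top_iff.1 hγ).2.add (Ent_ne_top_iff.1 hγ').2).div_const 2).add
    (integrable_const 2)) (hmid.mul (measurable_log.comp hmid)).aestronglyMeasurable
    (ae_of_all _ fun x => ?_)
  have hf0 : 0 ≤ f x := ENNReal.toReal_nonneg
  have hf'0 : 0 ≤ f' x := ENNReal.toReal_nonneg
  have hgap := mulLogGap_nonneg hf0 hf'0
  have h1 := self_sub_one_le_mul_log hf0
  have h2 := self_sub_one_le_mul_log hf'0
  have h3 := self_sub_one_le_mul_log (show 0 ≤ (f x + f' x) / 2 by positivity)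
  rw [mulLogGap] at hgap
  rw [norm_eq_abs, abs_le]
  simp only [Pi.add_apply]
  constructor <;> linarith

lemma Ent_half_smul_add [IsFiniteMeasure q] [IsFiniteMeasure γ] [IsFiniteMeasure γ']
    (hγ : Ent γ q ≠ ⊤) (hγ' : Ent γ' q ≠ ⊤) :
    Ent ((2⁻¹ : ℝ≥0) • (γ + γ')) q = ((∫ x, ((γ.rnDeriv q x).toReal + (γ'.rnDeriv q x).toReal) / 2 *
      log (((γ.rnDeriv q x).toReal + (γ'.rnDeriv q x).toReal) / 2) ∂q : ℝ) : EReal) := by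
  have hac : (2⁻¹ : ℝ≥0) • (γ + γ') ≪ q :=
    ((Ent_ne_top_iff.1 hγ).1.add_left (Ent_ne_top_iff.1 hγ').1).smul_left _
  have hφ : (fun x => (((2⁻¹ : ℝ≥0) • (γ + γ')).rnDeriv q x).toReal *
      log (((2⁻¹ : ℝ≥0) • (γ + γ')).rnDeriv q x).toReal) =ᵐ[q]
      fun x => ((γ.rnDeriv q x).toReal + (γ'.rnDeriv q x).toReal) / 2 *
        log (((γ.rnDeriv q x).toReal + (γ'.rnDeriv q x).toReal) / 2) := by
    filter_upwards [toReal_rnDeriv_half_smul_add (γ := γ) (γ' := γ') (q := q)] with x hx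
    rw [hx]
  rw [Ent, if_pos ⟨hac, (integrable_congr hφ).2 (integrable_mul_log_half_add hγ hγ')⟩,
    integral_congr_ae hφ]

lemma sq_integral_abs_sub_rnDeriv_le [IsFiniteMeasure q] [IsProbabilityMeasure γ]
    [IsProbabilityMeasure γ'] (hγ : Ent γ q ≠ ⊤) (hγ' : Ent γ' q ≠ ⊤) :
    (∫ x, |(γ.rnDeriv q x).toReal - (γ'.rnDeriv q x).toReal| ∂q) ^ 2 ≤
      8 * ((Ent γ q).toReal + (Ent γ' q).toReal - 2 * (Ent ((2⁻¹ : ℝ≥0) • (γ + γ')) q).toReal) := by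
  set f := fun x => (γ.rnDeriv q x).toReal
  set f' := fun x => (γ'.rnDeriv q x).toReal
  have hf : Integrable f q := Measure.integrable_toReal_rnDeriv
  have hf' : Integrable f' q := Measure.integrable_toReal_rnDeriv
  have hf0 : ∀ x, 0 ≤ f x := fun _ => ENNReal.toReal_nonneg
  have hf'0 : ∀ x, 0 ≤ f' x := fun _ => ENNReal.toReal_nonneg
  have hφ := (Ent_ne_top_iff.1 hγ).2
  have hφ' := (Ent_ne_top_iff.1 hγ').2
  have hφmid := integrable_mul_log_half_add hγ hγ'
  have hgap : Integrable (fun x => mulLogGap (f x) (f' x)) q := ((hφ.add hφ').div_const 2).sub hφmid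
  have hgap_integral : ∫ x, mulLogGap (f x) (f' x) ∂q =
      ((Ent γ q).toReal + (Ent γ' q).toReal) / 2 - (Ent ((2⁻¹ : ℝ≥0) • (γ + γ')) q).toReal := by
    rw [toReal_Ent hγ, toReal_Ent hγ', Ent_half_smul_add hγ hγ', EReal.toReal_coe,
      ← integral_add hφ hφ', ← integral_div]
    exact integral_sub ((hφ.add hφ').div_const 2) hφmid
  have hmass : ∫ x, (f x + f' x) ∂q = 2 := by
    rw [integral_add hf hf', Measure.integral_toReal_rnDeriv (Ent_ne_top_iff.1 hγ).1,
      Measure.integral_toReal_rnDeriv (Ent_ne_top_iff.1 hγ').1]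
    norm_num [probReal_univ]
  have := sq_integral_abs_le_of_sq_le_mul (h := fun x => f x - f' x) (w := fun x => f x + f' x)
    (hf.sub hf') (hgap.const_mul 8) (hf.add hf')
    (fun x => by have := mulLogGap_nonneg (hf0 x) (hf'0 x); positivity)
    (fun x => add_nonneg (hf0 x) (hf'0 x)) (fun x => sq_sub_le_mulLogGap (hf0 x) (hf'0 x))
  rw [integral_const_mul, hgap_integral, hmass] at this
  linarith

lemma abs_integral_sub_le_mul_integral_abs_sub_rnDeriv [SigmaFinite q] [IsFiniteMeasure γ]
    [IsFiniteMeasure γ'] (hγ : γ ≪ q) (hγ' : γ' ≪ q) {g : α → ℝ}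
    {M : ℝ} (hg : AEStronglyMeasurable g q) (hgM : ∀ᵐ x ∂q, |g x| ≤ M) :
    |∫ x, g x ∂γ - ∫ x, g x ∂γ'| ≤
      M * ∫ x, |(γ.rnDeriv q x).toReal - (γ'.rnDeriv q x).toReal| ∂q := by
  set f := fun x => (γ.rnDeriv q x).toReal
  set f' := fun x => (γ'.rnDeriv q x).toReal
  have hgγ : Integrable g γ := .of_bound (hg.mono_ac hγ) M (hγ.ae_le hgM)
  have hgγ' : Integrable g γ' := .of_bound (hg.mono_ac hγ') M (hγ'.ae_le hgM)
  have hfg : Integrable (fun x => f x * g x) q := (integrable_toReal_rnDeriv_mul_iff hγ).2 hgγ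
  have hf'g : Integrable (fun x => f' x * g x) q := (integrable_toReal_rnDeriv_mul_iff hγ').2 hgγ'
  calc |∫ x, g x ∂γ - ∫ x, g x ∂γ'|
      = |∫ x, (f x - f' x) * g x ∂q| := by
        rw [← integral_toReal_rnDeriv_mul hγ, ← integral_toReal_rnDeriv_mul hγ',
          ← integral_sub hfg hf'g]
        simp_rw [sub_mul]
    _ ≤ ∫ x, |(f x - f' x) * g x| ∂q := abs_integral_le_integral_abs
    _ ≤ ∫ x, M * |f x - f' x| ∂q := by
        refine integral_mono_ae ?_ ?_ ?_
        · exact ((hfg.sub hf'g).abs).congr (ae_of_all _ fun x => by simp [sub_mul])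
        · exact (Measure.integrable_toReal_rnDeriv.sub
            Measure.integrable_toReal_rnDeriv).abs.const_mul M
        filter_upwards [hgM] with x hx
        rw [abs_mul, mul_comm]
        exact mul_le_mul_of_nonneg_right hx (abs_nonneg _)
    _ = M * ∫ x, |f x - f' x| ∂q := integral_const_mul _ _

lemma sq_integral_sub_le_Ent_half_smul_add [IsFiniteMeasure q] [IsProbabilityMeasure γ]
    [IsProbabilityMeasure γ'] (hγ : Ent γ q ≠ ⊤) (hγ' : Ent γ' q ≠ ⊤) {g : α → ℝ} {M : ℝ}
    (hg : AEStronglyMeasurable g q) (hgM : ∀ᵐ x ∂q, |g x| ≤ M) :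
    (∫ x, g x ∂γ - ∫ x, g x ∂γ') ^ 2 ≤ 8 * M ^ 2 *
      ((Ent γ q).toReal + (Ent γ' q).toReal - 2 * (Ent ((2⁻¹ : ℝ≥0) • (γ + γ')) q).toReal) := by
  have h := abs_integral_sub_le_mul_integral_abs_sub_rnDeriv (Ent_ne_top_iff.1 hγ).1
    (Ent_ne_top_iff.1 hγ').1 hg hgM
  calc (∫ x, g x ∂γ - ∫ x, g x ∂γ') ^ 2 = |∫ x, g x ∂γ - ∫ x, g x ∂γ'| ^ 2 := (sq_abs _).symm
    _ ≤ (M * ∫ x, |(γ.rnDeriv q x).toReal - (γ'.rnDeriv q x).toReal| ∂q) ^ 2 :=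
        pow_le_pow_left₀ (abs_nonneg _) h 2
    _ ≤ M ^ 2 * (8 * ((Ent γ q).toReal + (Ent γ' q).toReal -
          2 * (Ent ((2⁻¹ : ℝ≥0) • (γ + γ')) q).toReal)) := by
        rw [mul_pow]
        exact mul_le_mul_of_nonneg_left (sq_integral_abs_sub_rnDeriv_le hγ hγ') (sq_nonneg M)
    _ = _ := by ring

end Entropy

lemma msupport_eq_support {X : Type*} [TopologicalSpace X] [MeasurableSpace X] (μ : Measure X) :
    msupport μ = μ.support := by
  ext x
  rw [(nhds_basis_opens x).mem_measureSupport]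
  simp only [msupport, pos_iff_ne_zero, and_imp]
  exact ⟨fun h U hx hU => h U hU hx, fun h U hU hx => h U hx hU⟩

structure IsCoupling {α β : Type*} [MeasurableSpace α] [MeasurableSpace β] (μm : Measure α)
    (μp : Measure β) (γ : Measure (α × β)) : Prop where
  isProbabilityMeasure : IsProbabilityMeasure γ
  fst_eq : γ.fst = μm
  snd_eq : γ.snd = μp

section Coupling

variable {α β : Type*} [MeasurableSpace α] [MeasurableSpace β] {μm : Measure α} {μp : Measure β}
  {γ γ' : Measure (α × β)}

lemma isCoupling_prod [IsProbabilityMeasure μm] [IsProbabilityMeasure μp] :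
    IsCoupling μm μp (μm.prod μp) :=
  ⟨inferInstance, Measure.fst_prod, Measure.snd_prod⟩

lemma IsCoupling.half_smul_add (hγ : IsCoupling μm μp γ) (hγ' : IsCoupling μm μp γ') :
    IsCoupling μm μp ((2⁻¹ : ℝ≥0) • (γ + γ')) := by
  have := hγ.isProbabilityMeasure
  have := hγ'.isProbabilityMeasure
  refine ⟨⟨?_⟩, ?_, ?_⟩
  · simp [ENNReal.smul_def, ENNReal.inv_two_add_inv_two]
  · rw [Measure.fst, Measure.map_smul, Measure.map_add _ _ measurable_fst, ← Measure.fst,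
      ← Measure.fst, hγ.fst_eq, hγ'.fst_eq, half_smul_add_self]
  · rw [Measure.snd, Measure.map_smul, Measure.map_add _ _ measurable_snd, ← Measure.snd,
      ← Measure.snd, hγ.snd_eq, hγ'.snd_eq, half_smul_add_self]

lemma IsCoupling.ae_mem_msupport_prod [TopologicalSpace α] [TopologicalSpace β]
    [HereditarilyLindelofSpace α] [HereditarilyLindelofSpace β] (hγ : IsCoupling μm μp γ) :
    ∀ᵐ p ∂γ, p ∈ msupport μm ×ˢ msupport μp := by
  have h₁ : ∀ᵐ p ∂γ, p.1 ∈ msupport μm := ae_of_ae_map measurable_fst.aemeasurable <| by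
    rw [← Measure.fst, hγ.fst_eq, msupport_eq_support]; exact Measure.support_mem_ae
  have h₂ : ∀ᵐ p ∂γ, p.2 ∈ msupport μp := ae_of_ae_map measurable_snd.aemeasurable <| by
    rw [← Measure.snd, hγ.snd_eq, msupport_eq_support]; exact Measure.support_mem_ae
  filter_upwards [h₁, h₂] with p hp₁ hp₂ using ⟨hp₁, hp₂⟩

end Coupling

section EntropicCost

variable {α β : Type*} [MeasurableSpace α] [MeasurableSpace β] {μm : Measure α} {μp : Measure β}
  {c : α × β → ℝ} {γ γε : Measure (α × β)} {t ε : ℝ}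

lemma entCost_le (hγ : IsCoupling μm μp γ) :
    entCost μm μp c t ≤ ((∫ p, c p ∂γ : ℝ) : EReal) + t * Ent γ (μm.prod μp) :=
  sInf_le ⟨γ, hγ.isProbabilityMeasure, hγ.fst_eq, hγ.snd_eq, rfl⟩

lemma entCost_le_coe (hγ : IsCoupling μm μp γ) (hE : Ent γ (μm.prod μp) ≠ ⊤) :
    entCost μm μp c t ≤ ((∫ p, c p ∂γ + t * (Ent γ (μm.prod μp)).toReal : ℝ) : EReal) := by
  rw [EReal.coe_add, EReal.coe_mul, EReal.coe_toReal hE Ent_ne_bot]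
  exact entCost_le hγ

lemma coe_le_entCost (ht : 0 < t) {r : ℝ}
    (h : ∀ γ, IsCoupling μm μp γ → Ent γ (μm.prod μp) ≠ ⊤ →
      r ≤ ∫ p, c p ∂γ + t * (Ent γ (μm.prod μp)).toReal) :
    (r : EReal) ≤ entCost μm μp c t := by
  refine le_sInf ?_
  rintro _ ⟨γ, hprob, hfst, hsnd, rfl⟩
  by_cases hE : Ent γ (μm.prod μp) = ⊤
  · rw [hE, EReal.mul_top_of_pos (by exact_mod_cast ht), EReal.coe_add_top]
    exact le_top
  · rw [← EReal.coe_toReal hE Ent_ne_bot, ← EReal.coe_mul, ← EReal.coe_add, EReal.coe_le_coe_iff]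
    exact h γ ⟨hprob, hfst, hsnd⟩ hE

lemma Ent_ne_top_of_eq_entCost [IsProbabilityMeasure μm] [IsProbabilityMeasure μp] (ht : 0 < t)
    (hopt : ((∫ p, c p ∂γ : ℝ) : EReal) + t * Ent γ (μm.prod μp) = entCost μm μp c t) :
    Ent γ (μm.prod μp) ≠ ⊤ := by
  intro hE
  have h := hopt.trans_le (entCost_le (c := c) (t := t) isCoupling_prod)
  rw [hE, EReal.mul_top_of_pos (by exact_mod_cast ht), EReal.coe_add_top, Ent_self, mul_zero,
    add_zero] at h
  exact EReal.coe_ne_top _ (top_le_iff.1 h)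

lemma sq_integral_sub_le_of_eq_entCost [IsProbabilityMeasure μm] [IsProbabilityMeasure μp]
    (hε : 0 < ε) (hc : ∀ γ, IsCoupling μm μp γ → Integrable c γ) {M : ℝ}
    (hcM : ∀ᵐ p ∂(μm.prod μp), |c p| ≤ M) (hγε : IsCoupling μm μp γε)
    (hEε : Ent γε (μm.prod μp) ≠ ⊤)
    (hopt : entCost μm μp c ε = ((∫ p, c p ∂γε + ε * (Ent γε (μm.prod μp)).toReal : ℝ) : EReal))
    (hγ : IsCoupling μm μp γ) (hE : Ent γ (μm.prod μp) ≠ ⊤) :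
    (∫ p, c p ∂γ - ∫ p, c p ∂γε) ^ 2 ≤ 8 * M ^ 2 / ε *
      (∫ p, c p ∂γ + ε * (Ent γ (μm.prod μp)).toReal -
        (∫ p, c p ∂γε + ε * (Ent γε (μm.prod μp)).toReal)) := by
  have := hγ.isProbabilityMeasure
  have := hγε.isProbabilityMeasure
  have hEm := Ent_half_smul_add hE hEε
  -- the midpoint coupling is admissible at `ε`, so it costs at least `v_ε`
  have hmid := hopt ▸ entCost_le_coe (c := c) (t := ε) (hγ.half_smul_add hγε)
    (hEm ▸ EReal.coe_ne_top _)
  rw [EReal.coe_le_coe_iff, integral_half_smul_add (hc γ hγ) (hc γε hγε)] at hmid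
  have hconv := sq_integral_sub_le_Ent_half_smul_add hE hEε
    (hc _ isCoupling_prod).aestronglyMeasurable hcM
  rw [div_mul_eq_mul_div, le_div_iff₀ hε]
  nlinarith [sq_nonneg M]

theorem hasDerivAt_entCost_of_sq_le (hε : 0 < ε) {K : ℝ} (hK : 0 ≤ K)
    (hγε : IsCoupling μm μp γε) (hEε : Ent γε (μm.prod μp) ≠ ⊤)
    (hopt : entCost μm μp c ε = ((∫ p, c p ∂γε + ε * (Ent γε (μm.prod μp)).toReal : ℝ) : EReal))
    (hgrowth : ∀ γ, IsCoupling μm μp γ → Ent γ (μm.prod μp) ≠ ⊤ →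
      (∫ p, c p ∂γ - ∫ p, c p ∂γε) ^ 2 ≤ K * (∫ p, c p ∂γ + ε * (Ent γ (μm.prod μp)).toReal -
        (∫ p, c p ∂γε + ε * (Ent γε (μm.prod μp)).toReal))) :
    HasDerivAt (fun t => (entCost μm μp c t).toReal) (Ent γε (μm.prod μp)).toReal ε := by
  refine hasDerivAt_of_abs_sub_le_sq (C := K / (2 * ε ^ 2)) ?_
  filter_upwards [Ioi_mem_nhds (half_lt_self hε)] with t (ht : ε / 2 < t)
  have hmin : ∀ γ, IsCoupling μm μp γ → Ent γ (μm.prod μp) ≠ ⊤ →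
      ∫ p, c p ∂γε + ε * (Ent γε (μm.prod μp)).toReal ≤
        ∫ p, c p ∂γ + ε * (Ent γ (μm.prod μp)).toReal := fun γ hγ hE =>
    EReal.coe_le_coe_iff.1 (hopt ▸ entCost_le_coe hγ hE)
  have hlower := coe_le_entCost (c := c) (t := t) (by linarith) fun γ hγ hE =>
    affine_sub_sq_le_of_sq_le_mul_gap hε (by linarith) hK (hmin γ hγ hE) (hgrowth γ hγ hE)
  have hupper := entCost_le_coe (c := c) (t := t) hγε hEε
  have hreal := (EReal.coe_toReal (ne_top_of_le_ne_top (EReal.coe_ne_top _) hupper)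
    (ne_bot_of_le_ne_bot (EReal.coe_ne_bot _) hlower)).symm
  rw [hreal, EReal.coe_le_coe_iff] at hlower hupper
  rw [hopt, EReal.toReal_coe, abs_le]
  constructor <;> nlinarith [sq_nonneg (t - ε)]

end EntropicCost

/-- For `ε > 0`, if `γ_ε` attains the infimum defining `v_ε`, then `ε ↦ v_ε` is differentiable
at `ε` with derivative `Ent(γ_ε | μ⁻ ⊗ μ⁺)`. -/
theorem entCost_hasDerivAt {d : ℕ}
    (μm μp : Measure (EuclideanSpace ℝ (Fin d)))
    [IsProbabilityMeasure μm] [IsProbabilityMeasure μp]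
    (hXm : IsCompact (msupport μm)) (hXp : IsCompact (msupport μp))
    (c : EuclideanSpace ℝ (Fin d) × EuclideanSpace ℝ (Fin d) → ℝ)
    (hc : ContinuousOn c (msupport μm ×ˢ msupport μp))
    (ε : ℝ) (hε : 0 < ε)
    (γε : Measure (EuclideanSpace ℝ (Fin d) × EuclideanSpace ℝ (Fin d)))
    (hprob : IsProbabilityMeasure γε) (hfst : γε.fst = μm) (hsnd : γε.snd = μp)
    (hopt : ((∫ p, c p ∂γε : ℝ) : EReal) + (ε : EReal) * Ent γε (μm.prod μp)
      = entCost μm μp c ε) :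
    HasDerivAt (fun t : ℝ => (entCost μm μp c t).toReal)
      ((Ent γε (μm.prod μp)).toReal) ε := by
  have hγε : IsCoupling μm μp γε := ⟨hprob, hfst, hsnd⟩
  have hEε := Ent_ne_top_of_eq_entCost hε hopt
  have hc_int : ∀ γ, IsCoupling μm μp γ → Integrable c γ := fun γ hγ =>
    have := hγ.isProbabilityMeasure
    integrable_of_continuousOn_of_ae_mem (hXm.prod hXp) hc hγ.ae_mem_msupport_prod
  obtain ⟨M, hM⟩ := (hXm.prod hXp).exists_bound_of_continuousOn hc
  have hcM : ∀ᵐ p ∂(μm.prod μp), |c p| ≤ M := by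
    filter_upwards [isCoupling_prod.ae_mem_msupport_prod] with p hp using hM p hp
  have hv : entCost μm μp c ε =
      ((∫ p, c p ∂γε + ε * (Ent γε (μm.prod μp)).toReal : ℝ) : EReal) := by
    rw [← hopt, EReal.coe_add, EReal.coe_mul, EReal.coe_toReal hEε Ent_ne_bot]
  exact hasDerivAt_entCost_of_sq_le hε (by positivity) hγε hEε hv fun γ hγ hE =>
    sq_integral_sub_le_of_eq_entCost hε hc_int hcM hγε hEε hv hγ hE
end
end

section
/- Let μ⁻, μ⁺ be probability measures on ℝ^d, let γ₀ be a coupling of μ⁻ and μ⁺, let δ > 0, and let (A_n)_{n∈ℕ} be a countable Borel partition of ℝ^d with diam(A_n) ≤ δ for every n. Then the block approximation γ^δ := Σ_{i,j} γ₀(A_i × A_j)·(μ⁻|_{A_i}/μ⁻(A_i)) ⊗ (μ⁺|_{A_j}/μ⁺(A_j)) (summing over pairs with μ⁻(A_i) > 0 and μ⁺(A_j) > 0) satisfies: (i) γ^δ is a coupling of μ⁻ and μ⁺ absolutely continuous with respect to μ⁻⊗μ⁺; (ii) Ent(γ^δ | μ⁻⊗μ⁺) ≤ Σ_n μ⁺(A_n)·log(1/μ⁺(A_n));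 (iii) there exists a coupling κ of γ₀ and γ^δ concentrated on the set of pairs ((x,y),(x',y')) with |x−x'| ≤ δ and |y−y'| ≤ δ (i.e. W_∞(γ₀, γ^δ) ≤ δ). -/
/-!
With respect to `μ⁻ ⊗ μ⁺` the block approximation has density constant on each block
`A i × A j`, equal to `p_ij / (a_i b_j)` with `p_ij = γ₀ (A i × A j)`, `a_i = μ⁻ (A i)`,
`b_j = μ⁺ (A j)`. Its entropy is therefore `∑ p_ij log (p_ij / (a_i b_j))`. Since `p_ij ≤ a_i`,
each term is at most `p_ij log (1 / b_j)`, and summing over `i` gives `b_j log (1 / b_j)`; each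
term is also at least `-a_i b_j`, a summable bound, which makes `ρ log ρ` integrable. The
`W_∞` coupling pairs `γ₀` restricted to a block with the normalized product measure on the same
block, so paired points lie in a common block, whose cells have diameter at most `δ`.
-/

open MeasureTheory Real Set Filter Classical
open scoped ENNReal NNReal Topology

noncomputable section

open Function

lemma ENNReal.mul_inv_mul_cancel_of_le {a b : ℝ≥0∞} (hb : b ≠ ∞) (hab : a ≤ b) :
    a * b⁻¹ * b = a :=
  ENNReal.div_mul_cancel' (fun h => le_antisymm (h ▸ hab) bot_le) (fun h => absurd h hb)

namespace Real

lemma div_mul_log_div_mul (p q : ℝ) : p / q * log (p / q) * q = p * log (p / q) := by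
  rcases eq_or_ne q 0 with rfl | hq
  · simp
  · field_simp

lemma neg_le_mul_log_div {p q : ℝ} (hp : 0 ≤ p) (hq : 0 ≤ q) : -q ≤ p * log (p / q) := by
  rcases hp.eq_or_lt with rfl | hp
  · simpa using hq
  rcases hq.eq_or_lt with rfl | hq
  · simp
  have h := mul_le_mul_of_nonneg_left (one_sub_inv_le_log_of_pos (div_pos hp hq)) hp.le
  rw [inv_div, mul_sub, mul_one, mul_div_cancel₀ _ hp.ne'] at h
  linarith

lemma mul_log_div_mul_le {p a b : ℝ} (hp : 0 ≤ p) (hpa : p ≤ a) :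
    p * log (p / (a * b)) ≤ p * -log b := by
  rcases hp.eq_or_lt with rfl | hp
  · simp
  rcases eq_or_ne b 0 with rfl | hb
  · simp
  have ha : 0 < a := hp.trans_le hpa
  rw [log_div hp.ne' (mul_ne_zero ha.ne' hb), log_mul ha.ne' hb]
  have := log_le_log hp hpa
  nlinarith

end Real

lemma tsum_indicator_apply_of_pairwise_disjoint {X ι M : Type*} [AddCommMonoid M]
    [TopologicalSpace M] {A : ι → Set X} (hA : Pairwise (Disjoint on A)) (c : ι → M) {i : ι}
    {x : X} (hx : x ∈ A i) :
    ∑' j, (A j).indicator (fun _ => c j) x = c i := by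
  rw [tsum_eq_single i fun j hj => indicator_of_notMem
    (fun hx' => disjoint_left.1 (hA hj) hx' hx) _]
  exact indicator_of_mem hx _

lemma pairwise_disjoint_prod {X Y ι κ : Type*} {A : ι → Set X} {B : κ → Set Y}
    (hA : Pairwise (Disjoint on A)) (hB : Pairwise (Disjoint on B)) :
    Pairwise (Disjoint on fun ij : ι × κ => A ij.1 ×ˢ B ij.2) :=
  fun ij kl hne => by
    by_cases h : ij.1 = kl.1
    · exact disjoint_prod.2 (Or.inr (hB fun h' => hne (Prod.ext h h')))
    · exact disjoint_prod.2 (Or.inl (hA h))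

section Partition

variable {X Y ι κ : Type*} [MeasurableSpace X] [MeasurableSpace Y]

structure IsMeasurablePartition (A : ι → Set X) : Prop where
  measurableSet : ∀ i, MeasurableSet (A i)
  pairwise_disjoint : Pairwise (Disjoint on A)
  iUnion_eq_univ : ⋃ i, A i = univ

namespace IsMeasurablePartition

variable {A : ι → Set X} {B : κ → Set Y}

lemma preimage (hA : IsMeasurablePartition A) {f : Y → X} (hf : Measurable f) :
    IsMeasurablePartition fun i => f ⁻¹' A i where
  measurableSet i := hf (hA.measurableSet i)
  pairwise_disjoint _ _ hij := (hA.pairwise_disjoint hij).preimage f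
  iUnion_eq_univ := by rw [← preimage_iUnion, hA.iUnion_eq_univ, preimage_univ]

lemma prod (hA : IsMeasurablePartition A) (hB : IsMeasurablePartition B) :
    IsMeasurablePartition fun ij : ι × κ => A ij.1 ×ˢ B ij.2 where
  measurableSet ij := (hA.measurableSet ij.1).prod (hB.measurableSet ij.2)
  pairwise_disjoint := pairwise_disjoint_prod hA.pairwise_disjoint hB.pairwise_disjoint
  iUnion_eq_univ := by rw [iUnion_prod A B, hA.iUnion_eq_univ, hB.iUnion_eq_univ, univ_prod_univ]

variable [Countable ι] [Countable κ]

lemma tsum_measure_inter (hA : IsMeasurablePartition A) (μ : Measure X) {s : Set X}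
    (hs : MeasurableSet s) : ∑' i, μ (s ∩ A i) = μ s := by
  rw [← measure_iUnion (fun i j hij => (hA.pairwise_disjoint hij).mono inter_subset_right
    inter_subset_right) fun i => hs.inter (hA.measurableSet i), ← inter_iUnion,
    hA.iUnion_eq_univ, inter_univ]

lemma tsum_measure (hA : IsMeasurablePartition A) (μ : Measure X) : ∑' i, μ (A i) = μ univ := by
  simpa using hA.tsum_measure_inter μ MeasurableSet.univ

lemma summable_measureReal (hA : IsMeasurablePartition A) (μ : Measure X) [IsFiniteMeasure μ] :
    Summable fun i => μ.real (A i) :=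
  ENNReal.summable_toReal (hA.tsum_measure μ ▸ measure_ne_top μ univ)

lemma tsum_measure_prod_right (hB : IsMeasurablePartition B) (γ : Measure (X × Y)) {s : Set X}
    (hs : MeasurableSet s) : ∑' j, γ (s ×ˢ B j) = γ.fst s := by
  rw [Measure.fst_apply hs]
  exact (hB.preimage measurable_snd).tsum_measure_inter γ (measurable_fst hs)

lemma tsum_measure_prod_left (hA : IsMeasurablePartition A) (γ : Measure (X × Y)) {t : Set Y}
    (ht : MeasurableSet t) : ∑' i, γ (A i ×ˢ t) = γ.snd t := by
  rw [Measure.snd_apply ht, ← (hA.preimage measurable_fst).tsum_measure_inter γ (measurable_snd ht)]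
  exact tsum_congr fun i => congrArg γ (inter_comm _ _)

lemma lintegral_eq_tsum (hA : IsMeasurablePartition A) (μ : Measure X) {f : X → ℝ≥0∞}
    {g : ι → ℝ≥0∞} (hf : ∀ i, ∀ x ∈ A i, f x = g i) : ∫⁻ x, f x ∂μ = ∑' i, g i * μ (A i) := by
  rw [← setLIntegral_univ, ← hA.iUnion_eq_univ,
    lintegral_iUnion hA.measurableSet hA.pairwise_disjoint]
  refine tsum_congr fun i => ?_
  rw [setLIntegral_congr_fun (hA.measurableSet i) (hf i), setLIntegral_const]

lemma integrable_of_summable (hA : IsMeasurablePartition A) {μ : Measure X} [IsFiniteMeasure μ]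
    {f : X → ℝ} {g : ι → ℝ} (hfm : AEStronglyMeasurable f μ) (hf : ∀ i, ∀ x ∈ A i, f x = g i)
    (hg : Summable fun i => g i * μ.real (A i)) : Integrable f μ := by
  refine ⟨hfm, ?_⟩
  have hnorm : ∀ i, ‖g i‖ₑ * μ (A i) = ‖g i * μ.real (A i)‖ₑ := fun i => by
    rw [enorm_mul, Real.enorm_of_nonneg measureReal_nonneg, ofReal_measureReal]
  rw [HasFiniteIntegral, hA.lintegral_eq_tsum μ (g := fun i => ‖g i‖ₑ)
    fun i x hx => congrArg _ (hf i x hx), tsum_congr hnorm, lt_top_iff_ne_top]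
  exact ENNReal.tsum_coe_ne_top_iff_summable.2 (NNReal.summable_coe.1 hg.norm)

lemma integral_eq_tsum (hA : IsMeasurablePartition A) {μ : Measure X} {f : X → ℝ} {g : ι → ℝ}
    (hf : ∀ i, ∀ x ∈ A i, f x = g i) (hfi : Integrable f μ) :
    ∫ x, f x ∂μ = ∑' i, g i * μ.real (A i) := by
  rw [← setIntegral_univ, ← hA.iUnion_eq_univ,
    integral_iUnion hA.measurableSet hA.pairwise_disjoint hfi.integrableOn]
  refine tsum_congr fun i => ?_
  rw [setIntegral_congr_fun (hA.measurableSet i) (hf i), setIntegral_const, smul_eq_mul, mul_comm]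

end IsMeasurablePartition

end Partition

namespace MeasureTheory.Measure

variable {X Y : Type*} [MeasurableSpace X] [MeasurableSpace Y]

lemma measure_prod_le_fst_apply (γ : Measure (X × Y)) (s : Set X) (t : Set Y) :
    γ (s ×ˢ t) ≤ γ.fst s :=
  (measure_mono fun _ hz => hz.1).trans (le_map_apply measurable_fst.aemeasurable s)

lemma measure_prod_le_snd_apply (γ : Measure (X × Y)) (s : Set X) (t : Set Y) :
    γ (s ×ˢ t) ≤ γ.snd t :=
  (measure_mono fun _ hz => hz.2).trans (le_map_apply measurable_snd.aemeasurable t)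

end MeasureTheory.Measure

lemma ent_withDensity {X : Type*} [MeasurableSpace X] {q : Measure X} [SigmaFinite q]
    {ρ : X → ℝ≥0∞} (hρ : Measurable ρ)
    (hint : Integrable (fun x => (ρ x).toReal * log (ρ x).toReal) q) :
    Ent (q.withDensity ρ) q = ∫ x, (ρ x).toReal * log (ρ x).toReal ∂q := by
  have hρ' : ∀ᵐ x ∂q, (ρ x).toReal * log (ρ x).toReal
      = ((q.withDensity ρ).rnDeriv q x).toReal * log ((q.withDensity ρ).rnDeriv q x).toReal := by
    filter_upwards [Measure.rnDeriv_withDensity q hρ] with x hx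
    rw [hx]
  rw [Ent, if_pos ⟨withDensity_absolutelyContinuous q ρ, hint.congr hρ'⟩, integral_congr_ae hρ']

section BlockApprox

variable {X Y ι κ : Type*} [MeasurableSpace X] [MeasurableSpace Y]
  (γ : Measure (X × Y)) (μ : Measure X) (ν : Measure Y) (A : ι → Set X) (B : κ → Set Y)

/-- If `μ (A i) = 0` the inverse is `∞`, but then `γ (A i ×ˢ B j) = 0` for a coupling `γ` and
`0 * ∞ = 0`: null blocks carry no mass, as in the paper's sum over blocks of positive mass. -/
def blockWeight (ij : ι × κ) : ℝ≥0∞ :=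
  γ (A ij.1 ×ˢ B ij.2) * (μ (A ij.1))⁻¹ * (ν (B ij.2))⁻¹

def blockApprox : Measure (X × Y) :=
  Measure.sum fun ij : ι × κ =>
    blockWeight γ μ ν A B ij • (μ.restrict (A ij.1)).prod (ν.restrict (B ij.2))

def blockDensity (z : X × Y) : ℝ≥0∞ :=
  ∑' ij : ι × κ, (A ij.1 ×ˢ B ij.2).indicator (fun _ => blockWeight γ μ ν A B ij) z

def blockCoupling : Measure ((X × Y) × (X × Y)) :=
  Measure.sum fun ij : ι × κ => ((μ (A ij.1))⁻¹ * (ν (B ij.2))⁻¹) •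
    (γ.restrict (A ij.1 ×ˢ B ij.2)).prod ((μ.restrict (A ij.1)).prod (ν.restrict (B ij.2)))

variable {γ μ ν A B}

lemma toReal_blockWeight (ij : ι × κ) :
    (blockWeight γ μ ν A B ij).toReal
      = γ.real (A ij.1 ×ˢ B ij.2) / (μ.real (A ij.1) * ν.real (B ij.2)) := by
  rw [blockWeight, ENNReal.toReal_mul, ENNReal.toReal_mul, ENNReal.toReal_inv,
    ENNReal.toReal_inv, div_eq_mul_inv, mul_inv, ← mul_assoc]
  rfl

lemma blockDensity_eq (hA : Pairwise (Disjoint on A)) (hB : Pairwise (Disjoint on B))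
    {ij : ι × κ} {z : X × Y} (hz : z ∈ A ij.1 ×ˢ B ij.2) :
    blockDensity γ μ ν A B z = blockWeight γ μ ν A B ij :=
  tsum_indicator_apply_of_pairwise_disjoint (pairwise_disjoint_prod hA hB) _ hz

lemma snd_blockCoupling [SFinite μ] [SFinite ν] :
    (blockCoupling γ μ ν A B).snd = blockApprox γ μ ν A B := by
  ext t ht
  rw [Measure.snd_apply ht, blockCoupling, blockApprox, Measure.sum_apply _ (measurable_snd ht),
    Measure.sum_apply _ ht]
  refine tsum_congr fun ij => ?_
  rw [Measure.smul_apply, Measure.smul_apply, smul_eq_mul, smul_eq_mul, ← univ_prod,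
    Measure.prod_prod, Measure.restrict_apply_univ, blockWeight]
  ring

variable [Countable ι] [Countable κ]

lemma measurable_blockDensity (hA : ∀ i, MeasurableSet (A i)) (hB : ∀ j, MeasurableSet (B j)) :
    Measurable (blockDensity γ μ ν A B) :=
  Measurable.tsum fun ij => measurable_const.indicator ((hA ij.1).prod (hB ij.2))

lemma blockApprox_eq_withDensity (hA : ∀ i, MeasurableSet (A i)) (hB : ∀ j, MeasurableSet (B j))
    [SFinite μ] [SFinite ν] :
    blockApprox γ μ ν A B = (μ.prod ν).withDensity (blockDensity γ μ ν A B) := by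
  set f : ι × κ → X × Y → ℝ≥0∞ := fun ij =>
    (A ij.1 ×ˢ B ij.2).indicator fun _ => blockWeight γ μ ν A B ij
  have hf : ∀ ij, Measurable (f ij) :=
    fun ij => measurable_const.indicator ((hA ij.1).prod (hB ij.2))
  rw [show blockDensity γ μ ν A B = ∑' ij, f ij from funext fun _ => ENNReal.tsum_apply.symm,
    withDensity_tsum hf]
  refine congrArg Measure.sum (funext fun ij => ?_)
  rw [withDensity_indicator ((hA ij.1).prod (hB ij.2)), withDensity_const, Measure.prod_restrict]

lemma fst_blockApprox [IsFiniteMeasure μ] [IsFiniteMeasure ν] (hA : IsMeasurablePartition A)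
    (hB : IsMeasurablePartition B) (hμ : γ.fst = μ) (hν : γ.snd = ν) :
    (blockApprox γ μ ν A B).fst = μ := by
  ext s hs
  rw [Measure.fst_apply hs, blockApprox, Measure.sum_apply _ (measurable_fst hs),
    ENNReal.tsum_prod', ← hA.tsum_measure_inter μ hs]
  refine tsum_congr fun i => ?_
  calc ∑' j, (blockWeight γ μ ν A B (i, j) • (μ.restrict (A i)).prod (ν.restrict (B j)))
        (Prod.fst ⁻¹' s)
      = ∑' j, μ (s ∩ A i) * (μ (A i))⁻¹ * (γ (A i ×ˢ B j) * (ν (B j))⁻¹ * ν (B j)) := by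
        refine tsum_congr fun j => ?_
        rw [Measure.smul_apply, smul_eq_mul, ← prod_univ, Measure.prod_prod,
          Measure.restrict_apply hs, Measure.restrict_apply_univ, blockWeight]
        ring
    _ = μ (s ∩ A i) * (μ (A i))⁻¹ * ∑' j, γ (A i ×ˢ B j) := by
        rw [ENNReal.tsum_mul_left]
        exact congrArg _ (tsum_congr fun j => ENNReal.mul_inv_mul_cancel_of_le
          (measure_ne_top _ _) (hν ▸ γ.measure_prod_le_snd_apply _ _))
    _ = μ (s ∩ A i) := by
        rw [hB.tsum_measure_prod_right γ (hA.measurableSet i), hμ,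
          ENNReal.mul_inv_mul_cancel_of_le (measure_ne_top _ _) (measure_mono inter_subset_right)]

lemma snd_blockApprox [IsFiniteMeasure μ] [IsFiniteMeasure ν] (hA : IsMeasurablePartition A)
    (hB : IsMeasurablePartition B) (hμ : γ.fst = μ) (hν : γ.snd = ν) :
    (blockApprox γ μ ν A B).snd = ν := by
  ext t ht
  rw [Measure.snd_apply ht, blockApprox, Measure.sum_apply _ (measurable_snd ht),
    ENNReal.tsum_prod', ENNReal.tsum_comm, ← hB.tsum_measure_inter ν ht]
  refine tsum_congr fun j => ?_
  calc ∑' i, (blockWeight γ μ ν A B (i, j) • (μ.restrict (A i)).prod (ν.restrict (B j)))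
        (Prod.snd ⁻¹' t)
      = ∑' i, ν (t ∩ B j) * (ν (B j))⁻¹ * (γ (A i ×ˢ B j) * (μ (A i))⁻¹ * μ (A i)) := by
        refine tsum_congr fun i => ?_
        rw [Measure.smul_apply, smul_eq_mul, ← univ_prod, Measure.prod_prod,
          Measure.restrict_apply ht, Measure.restrict_apply_univ, blockWeight]
        ring
    _ = ν (t ∩ B j) * (ν (B j))⁻¹ * ∑' i, γ (A i ×ˢ B j) := by
        rw [ENNReal.tsum_mul_left]
        exact congrArg _ (tsum_congr fun i => ENNReal.mul_inv_mul_cancel_of_le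
          (measure_ne_top _ _) (hμ ▸ γ.measure_prod_le_fst_apply _ _))
    _ = ν (t ∩ B j) := by
        rw [hA.tsum_measure_prod_left γ (hB.measurableSet j), hν,
          ENNReal.mul_inv_mul_cancel_of_le (measure_ne_top _ _) (measure_mono inter_subset_right)]

lemma fst_blockCoupling [IsFiniteMeasure μ] [IsFiniteMeasure ν] (hA : IsMeasurablePartition A)
    (hB : IsMeasurablePartition B) (hμ : γ.fst = μ) (hν : γ.snd = ν) :
    (blockCoupling γ μ ν A B).fst = γ := by
  ext s hs
  rw [Measure.fst_apply hs, blockCoupling, Measure.sum_apply _ (measurable_fst hs),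
    ← (hA.prod hB).tsum_measure_inter γ hs]
  refine tsum_congr fun ij => ?_
  have hle := measure_mono (μ := γ) (inter_subset_right (s := s) (t := A ij.1 ×ˢ B ij.2))
  rw [Measure.smul_apply, smul_eq_mul, ← prod_univ, Measure.prod_prod, Measure.restrict_apply hs,
    ← univ_prod_univ, Measure.prod_prod, Measure.restrict_apply_univ, Measure.restrict_apply_univ]
  calc (μ (A ij.1))⁻¹ * (ν (B ij.2))⁻¹ * (γ (s ∩ (A ij.1 ×ˢ B ij.2)) * (μ (A ij.1) * ν (B ij.2)))
      = γ (s ∩ (A ij.1 ×ˢ B ij.2)) * (μ (A ij.1))⁻¹ * μ (A ij.1) * (ν (B ij.2))⁻¹ * ν (B ij.2) := by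
        ring
    _ = γ (s ∩ (A ij.1 ×ˢ B ij.2)) := by
        rw [ENNReal.mul_inv_mul_cancel_of_le (measure_ne_top _ _)
            (hle.trans (hμ ▸ γ.measure_prod_le_fst_apply _ _)),
          ENNReal.mul_inv_mul_cancel_of_le (measure_ne_top _ _)
            (hle.trans (hν ▸ γ.measure_prod_le_snd_apply _ _))]

lemma ae_mem_block_blockCoupling [SFinite γ] [SFinite μ] [SFinite ν] (hA : ∀ i, MeasurableSet (A i))
    (hB : ∀ j, MeasurableSet (B j)) :
    ∀ᵐ q ∂blockCoupling γ μ ν A B, ∃ ij : ι × κ,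
      q.1 ∈ A ij.1 ×ˢ B ij.2 ∧ q.2 ∈ A ij.1 ×ˢ B ij.2 := by
  refine Measure.ae_sum_iff.2 fun ij => Measure.ae_smul_measure ?_ _
  rw [Measure.prod_restrict, Measure.prod_restrict]
  filter_upwards [ae_restrict_mem (((hA ij.1).prod (hB ij.2)).prod ((hA ij.1).prod (hB ij.2)))]
    with q hq using ⟨ij, hq⟩

end BlockApprox

section BlockEntropy

variable {X Y ι κ : Type*} [MeasurableSpace X] [MeasurableSpace Y]
  (γ : Measure (X × Y)) (μ : Measure X) (ν : Measure Y) (A : ι → Set X) (B : κ → Set Y)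

def blockEntropy (ij : ι × κ) : ℝ :=
  γ.real (A ij.1 ×ˢ B ij.2) * log (γ.real (A ij.1 ×ˢ B ij.2) / (μ.real (A ij.1) * ν.real (B ij.2)))

variable {γ μ ν A B}

lemma neg_le_blockEntropy (ij : ι × κ) :
    -(μ.real (A ij.1) * ν.real (B ij.2)) ≤ blockEntropy γ μ ν A B ij :=
  neg_le_mul_log_div measureReal_nonneg (mul_nonneg measureReal_nonneg measureReal_nonneg)

lemma blockEntropy_le [IsFiniteMeasure μ] (hμ : γ.fst = μ) (ij : ι × κ) :
    blockEntropy γ μ ν A B ij ≤ γ.real (A ij.1 ×ˢ B ij.2) * -log (ν.real (B ij.2)) :=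
  mul_log_div_mul_le measureReal_nonneg
    (ENNReal.toReal_mono (measure_ne_top _ _) (hμ ▸ γ.measure_prod_le_fst_apply _ _))

lemma tsum_ofReal_measureReal_mul_neg_log [Countable ι] [IsFiniteMeasure ν]
    (hA : IsMeasurablePartition A) (hB : ∀ j, MeasurableSet (B j)) (hν : γ.snd = ν) :
    ∑' ij : ι × κ, ENNReal.ofReal (γ.real (A ij.1 ×ˢ B ij.2) * -log (ν.real (B ij.2)))
      = ∑' j, ENNReal.ofReal (negMulLog (ν.real (B j))) := by
  have hterm : ∀ i j, ENNReal.ofReal (γ.real (A i ×ˢ B j) * -log (ν.real (B j)))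
      = γ (A i ×ˢ B j) * ENNReal.ofReal (-log (ν.real (B j))) := fun i j => by
    rw [ENNReal.ofReal_mul measureReal_nonneg, ofReal_measureReal (ne_top_of_le_ne_top
      (measure_ne_top ν (B j)) (hν ▸ γ.measure_prod_le_snd_apply _ _))]
  rw [ENNReal.tsum_prod', ENNReal.tsum_comm]
  refine tsum_congr fun j => ?_
  rw [tsum_congr fun i => hterm i j, ENNReal.tsum_mul_right, hA.tsum_measure_prod_left γ (hB j),
    hν, negMulLog, neg_mul_comm, ENNReal.ofReal_mul measureReal_nonneg, ofReal_measureReal]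

lemma hasSum_measureReal_mul_neg_log [Countable ι] [IsProbabilityMeasure ν]
    (hA : IsMeasurablePartition A) (hB : ∀ j, MeasurableSet (B j)) (hν : γ.snd = ν)
    (hS : ∑' j, ENNReal.ofReal (negMulLog (ν.real (B j))) ≠ ∞) :
    HasSum (fun ij : ι × κ => γ.real (A ij.1 ×ˢ B ij.2) * -log (ν.real (B ij.2)))
      (∑' j, ENNReal.ofReal (negMulLog (ν.real (B j)))).toReal := by
  have h := ENNReal.hasSum_toReal ((tsum_ofReal_measureReal_mul_neg_log hA hB hν).trans_ne hS)
  rw [← ENNReal.tsum_toReal_eq fun _ => ENNReal.ofReal_ne_top,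
    tsum_ofReal_measureReal_mul_neg_log hA hB hν] at h
  simpa only [ENNReal.toReal_ofReal (mul_nonneg measureReal_nonneg
    (neg_nonneg.2 (log_nonpos measureReal_nonneg measureReal_le_one)))] using h

lemma summable_blockEntropy [Countable ι] [Countable κ] [IsFiniteMeasure μ] [IsProbabilityMeasure ν]
    (hA : IsMeasurablePartition A) (hB : IsMeasurablePartition B) (hμ : γ.fst = μ)
    (hν : γ.snd = ν) (hS : ∑' j, ENNReal.ofReal (negMulLog (ν.real (B j))) ≠ ∞) :
    Summable (blockEntropy γ μ ν A B) := by
  have hu := (hasSum_measureReal_mul_neg_log hA hB.measurableSet hν hS).summable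
  have hμν : Summable fun ij : ι × κ => μ.real (A ij.1) * ν.real (B ij.2) :=
    (hA.summable_measureReal μ).mul_of_nonneg (hB.summable_measureReal ν)
      (fun _ => measureReal_nonneg) fun _ => measureReal_nonneg
  refine Summable.of_norm_bounded (hμν.add hu) fun ij => ?_
  rw [Real.norm_eq_abs, abs_le]
  have hu_nonneg : 0 ≤ γ.real (A ij.1 ×ˢ B ij.2) * -log (ν.real (B ij.2)) :=
    mul_nonneg measureReal_nonneg (neg_nonneg.2 (log_nonpos measureReal_nonneg measureReal_le_one))
  have hμν_nonneg : 0 ≤ μ.real (A ij.1) * ν.real (B ij.2) :=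
    mul_nonneg measureReal_nonneg measureReal_nonneg
  have hlower : _ ≤ blockEntropy γ μ ν A B ij := neg_le_blockEntropy ij
  have hupper : blockEntropy γ μ ν A B ij ≤ _ := blockEntropy_le hμ ij
  constructor <;> linarith

lemma ent_blockApprox_eq_tsum [Countable ι] [Countable κ] [IsFiniteMeasure μ] [IsFiniteMeasure ν]
    (hA : IsMeasurablePartition A) (hB : IsMeasurablePartition B)
    (hsum : Summable (blockEntropy γ μ ν A B)) :
    Ent (blockApprox γ μ ν A B) (μ.prod ν) = ((∑' ij, blockEntropy γ μ ν A B ij : ℝ) : EReal) := by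
  have hF : ∀ ij : ι × κ, ∀ z ∈ A ij.1 ×ˢ B ij.2,
      (blockDensity γ μ ν A B z).toReal * log (blockDensity γ μ ν A B z).toReal
        = (blockWeight γ μ ν A B ij).toReal * log (blockWeight γ μ ν A B ij).toReal :=
    fun ij z hz => by rw [blockDensity_eq hA.pairwise_disjoint hB.pairwise_disjoint hz]
  have hblock : ∀ ij : ι × κ, (blockWeight γ μ ν A B ij).toReal *
      log (blockWeight γ μ ν A B ij).toReal * (μ.prod ν).real (A ij.1 ×ˢ B ij.2)
        = blockEntropy γ μ ν A B ij := fun ij => by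
    rw [measureReal_prod_prod, toReal_blockWeight, div_mul_log_div_mul, blockEntropy]
  have hρ := measurable_blockDensity (γ := γ) (μ := μ) (ν := ν) hA.measurableSet hB.measurableSet
  have hint := (hA.prod hB).integrable_of_summable (μ := μ.prod ν)
    (hρ.ennreal_toReal.mul (measurable_log.comp hρ.ennreal_toReal)).aestronglyMeasurable hF
    (hsum.congr fun ij => (hblock ij).symm)
  rw [blockApprox_eq_withDensity hA.measurableSet hB.measurableSet, ent_withDensity hρ hint,
    (hA.prod hB).integral_eq_tsum hF hint, tsum_congr hblock]

theorem ent_blockApprox_le [Countable ι] [Countable κ] [IsFiniteMeasure μ] [IsProbabilityMeasure ν]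
    (hA : IsMeasurablePartition A) (hB : IsMeasurablePartition B) (hμ : γ.fst = μ)
    (hν : γ.snd = ν) :
    Ent (blockApprox γ μ ν A B) (μ.prod ν)
      ≤ ((∑' j, ENNReal.ofReal (negMulLog (ν.real (B j))) : ℝ≥0∞) : EReal) := by
  obtain hS | hS := eq_or_ne (∑' j, ENNReal.ofReal (negMulLog (ν.real (B j)))) ∞
  · simp [hS]
  have hsum := summable_blockEntropy hA hB hμ hν hS
  have hu := hasSum_measureReal_mul_neg_log hA hB.measurableSet hν hS
  rw [ent_blockApprox_eq_tsum hA hB hsum, ← EReal.coe_ennreal_toReal hS, EReal.coe_le_coe_iff,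
    ← hu.tsum_eq]
  exact hsum.tsum_le_tsum (blockEntropy_le hμ) hu.summable

end BlockEntropy

/-- **Block approximation**: given a coupling `γ₀` of `μ⁻, μ⁺` and a countable Borel partition
of `ℝ^d` into sets of diameter `≤ δ`, the block approximation `γ^δ` is a coupling of `μ⁻, μ⁺`,
absolutely continuous w.r.t. `μ⁻ ⊗ μ⁺`, with entropy at most `Σ_n μ⁺(A_n) log(1/μ⁺(A_n))`,
and `W_∞(γ₀, γ^δ) ≤ δ`. -/
theorem block_approximation {d : ℕ}
    (μm μp : Measure (EuclideanSpace ℝ (Fin d)))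
    [IsProbabilityMeasure μm] [IsProbabilityMeasure μp]
    (γ0 : Measure (EuclideanSpace ℝ (Fin d) × EuclideanSpace ℝ (Fin d)))
    [IsProbabilityMeasure γ0] (hfst : γ0.fst = μm) (hsnd : γ0.snd = μp)
    (δ : ℝ) (hδ : 0 < δ)
    (A : ℕ → Set (EuclideanSpace ℝ (Fin d)))
    (hmeas : ∀ n, MeasurableSet (A n))
    (hdiam : ∀ n, EMetric.diam (A n) ≤ ENNReal.ofReal δ)
    (hcover : (⋃ n, A n) = Set.univ)
    (hdisj : Pairwise (Function.onFun Disjoint A))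
    (γδ : Measure (EuclideanSpace ℝ (Fin d) × EuclideanSpace ℝ (Fin d)))
    (hγδ : γδ = Measure.sum (fun ij : ℕ × ℕ =>
      (γ0 (A ij.1 ×ˢ A ij.2) * (μm (A ij.1))⁻¹ * (μp (A ij.2))⁻¹) •
        ((μm.restrict (A ij.1)).prod (μp.restrict (A ij.2))))) :
    (γδ.fst = μm ∧ γδ.snd = μp ∧ γδ ≪ μm.prod μp) ∧
    Ent γδ (μm.prod μp)
      ≤ ((∑' n, ENNReal.ofReal (Real.negMulLog ((μp (A n)).toReal)) : ℝ≥0∞) : EReal) ∧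
    ∃ κ : Measure ((EuclideanSpace ℝ (Fin d) × EuclideanSpace ℝ (Fin d))
        × (EuclideanSpace ℝ (Fin d) × EuclideanSpace ℝ (Fin d))),
      IsProbabilityMeasure κ ∧ κ.fst = γ0 ∧ κ.snd = γδ ∧
      κ {q | dist q.1.1 q.2.1 ≤ δ ∧ dist q.1.2 q.2.2 ≤ δ}ᶜ = 0 := by
  have hA : IsMeasurablePartition A := ⟨hmeas, hdisj, hcover⟩
  obtain rfl : γδ = blockApprox γ0 μm μp A A := hγδ
  have hdist {n x y} (hx : x ∈ A n) (hy : y ∈ A n) : dist x y ≤ δ :=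
    (edist_le_ofReal hδ.le).1 ((Metric.edist_le_ediam_of_mem hx hy).trans (hdiam n))
  refine ⟨⟨fst_blockApprox hA hA hfst hsnd, snd_blockApprox hA hA hfst hsnd, ?_⟩,
    ent_blockApprox_le hA hA hfst hsnd, blockCoupling γ0 μm μp A A,
    ⟨by rw [← Measure.fst_univ, fst_blockCoupling hA hA hfst hsnd, measure_univ]⟩,
    fst_blockCoupling hA hA hfst hsnd, snd_blockCoupling, ?_⟩
  · rw [blockApprox_eq_withDensity hmeas hmeas]
    exact withDensity_absolutelyContinuous _ _
  · refine ae_iff.1 ((ae_mem_block_blockCoupling hmeas hmeas).mono ?_)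
    rintro q ⟨ij, ⟨h11, h12⟩, h21, h22⟩
    exact ⟨hdist h11 h21, hdist h12 h22⟩
end
end
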